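/- arXiv:1912.09029 — 7 statements merged into one kernel-verified Lean document; each statement's English description precedes it below -/
import Mathlib

section
/- Let n be an odd integer and W an arbitrary integer. Define Λ as the quotient of the additive group of Laurent polynomials Z[t^{±1}] by the subgroup generated by t^0, t^{-1}, and t^k + (-1)^n t^{W-1-k} for all k ∈ Z. Then Λ is a free abelian group with basis the images of the monomials t^k for k ∈ Z satisfying k ≥ (W-1)/2 and k ∉ {-1, 0, W-1, W}. -/
/-- The abelian group of integer Laurent polynomials `ℤ[t^{±1}]`,
with `t^k` represented by `Finsupp.single k 1`. -/
abbrev LaurentGrp : Type := ℤ →₀ ℤ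

/-- The set of relators: `t^0`, `t^{-1}`, and `t^k + (-1)^n t^{W-1-k}` for all `k ∈ ℤ`. -/
def relSet (n W : ℤ) : Set LaurentGrp :=
  {Finsupp.single 0 1, Finsupp.single (-1) 1} ∪
    {x | ∃ k : ℤ, x = Finsupp.single k 1 +
      Finsupp.single (W - 1 - k) (((-1 : ℤˣ) ^ n : ℤˣ) : ℤ)}

/-- The quotient group `Λ = ℤ[t^{±1}] / ⟨t^0, t^{-1}, t^k + (-1)^n t^{W-1-k}⟩`. -/
abbrev LambdaGrp (n W : ℤ) : Type := LaurentGrp ⧸ AddSubgroup.closure (relSet n W)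

/-!
For `n` odd the relators say `t^k = t^{W-1-k}`, together with `t^0 = t^{-1} = 0` and hence
also `t^{W-1} = t^W = 0`. Sending `t^k` to the basis vector of the representative `k' ≥ (W-1)/2`
of the pair `{k, W-1-k}` (and to `0` when `k'` is one of `-1, 0, W-1, W`) kills all relators,
and the inclusion of the basis monomials is a section of it modulo the relators, so the map
induces an isomorphism of `Λ` with the free abelian group on the admissible `k`.
-/

namespace QuotientAddGroup

variable {M N : Type*} [AddCommGroup M] [AddCommGroup N]

def equivOfRetract (S : AddSubgroup M) (φ : M →+ N) (s : N →+ M) (hS : S ≤ φ.ker)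
    (hφs : ∀ y, φ (s y) = y) (hsφ : ∀ x, s (φ x) - x ∈ S) : M ⧸ S ≃+ N where
  toFun := lift S φ hS
  invFun y := s y
  left_inv x := by
    induction x using QuotientAddGroup.induction_on with
    | H x => exact eq_iff_sub_mem.mpr (hsφ x)
  right_inv := hφs
  map_add' := map_add _

end QuotientAddGroup

namespace LambdaGrp

open Finsupp

abbrev BasisIdx (W : ℤ) : Type :=
  {k : ℤ // W - 1 ≤ 2 * k ∧ k ∉ ({-1, 0, W - 1, W} : Set ℤ)}

def upperRep (W k : ℤ) : ℤ := if W - 1 ≤ 2 * k then k else W - 1 - k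

theorem le_two_mul_upperRep (W k : ℤ) : W - 1 ≤ 2 * upperRep W k := by
  unfold upperRep; split <;> omega

theorem upperRep_reflect (W k : ℤ) : upperRep W (W - 1 - k) = upperRep W k := by
  unfold upperRep; split <;> split <;> omega

theorem upperRep_of_le {W k : ℤ} (hk : W - 1 ≤ 2 * k) : upperRep W k = k := if_pos hk

noncomputable def monomialCoord (W k : ℤ) : BasisIdx W →₀ ℤ :=
  if h : upperRep W k ∉ ({-1, 0, W - 1, W} : Set ℤ) then
    single ⟨upperRep W k, le_two_mul_upperRep W k, h⟩ 1
  else 0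

theorem monomialCoord_reflect (W k : ℤ) : monomialCoord W (W - 1 - k) = monomialCoord W k := by
  simp only [monomialCoord, upperRep_reflect]

theorem monomialCoord_val (W : ℤ) (j : BasisIdx W) : monomialCoord W j.1 = single j 1 := by
  have hj : upperRep W j.1 = j.1 := upperRep_of_le j.2.1
  rw [monomialCoord, dif_pos (by rw [hj]; exact j.2.2)]
  exact congrArg (single · 1) (Subtype.ext hj)

theorem monomialCoord_of_mem_excluded {W k : ℤ} (hk : k ∈ ({-1, 0, W - 1, W} : Set ℤ)) :
    monomialCoord W k = 0 := by
  have hrep : upperRep W k ∈ ({-1, 0, W - 1, W} : Set ℤ) := by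
    simp only [Set.mem_insert_iff, Set.mem_singleton_iff] at hk ⊢
    unfold upperRep; split <;> omega
  rw [monomialCoord, dif_neg (not_not_intro hrep)]

noncomputable def toCoords (W : ℤ) : LaurentGrp →+ (BasisIdx W →₀ ℤ) :=
  (linearCombination ℤ (monomialCoord W)).toAddMonoidHom

noncomputable def ofCoords (W : ℤ) : (BasisIdx W →₀ ℤ) →+ LaurentGrp :=
  mapDomain.addMonoidHom Subtype.val

theorem toCoords_single (W k c : ℤ) : toCoords W (single k c) = c • monomialCoord W k :=
  linearCombination_single ..

theorem ofCoords_single (W : ℤ) (j : BasisIdx W) (c : ℤ) :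
    ofCoords W (single j c) = single j.1 c :=
  mapDomain_single

theorem toCoords_ofCoords (W : ℤ) (y : BasisIdx W →₀ ℤ) :
    toCoords W (ofCoords W y) = y := by
  suffices (toCoords W).comp (ofCoords W) = AddMonoidHom.id _ from DFunLike.congr_fun this y
  refine addHom_ext fun j c => ?_
  simp [ofCoords_single, toCoords_single, monomialCoord_val]

variable {n W : ℤ}

theorem closure_le_ker_toCoords (hn : Odd n) :
    AddSubgroup.closure (relSet n W) ≤ (toCoords W).ker := by
  rw [AddSubgroup.closure_le]
  rintro x ((rfl | rfl) | ⟨k, rfl⟩) <;>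
    simp [toCoords_single, monomialCoord_of_mem_excluded, hn.neg_one_zpow, monomialCoord_reflect]

theorem single_sub_single_reflect_mem (hn : Odd n) (k : ℤ) :
    single k 1 - single (W - 1 - k) 1 ∈ AddSubgroup.closure (relSet n W) := by
  have h := AddSubgroup.subset_closure (show _ ∈ relSet n W from Or.inr ⟨k, rfl⟩)
  rwa [hn.neg_one_zpow, Units.val_neg, Units.val_one, single_neg, ← sub_eq_add_neg] at h

theorem single_mem_of_mem_excluded (hn : Odd n) {k : ℤ}
    (hk : k ∈ ({-1, 0, W - 1, W} : Set ℤ)) :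
    single k 1 ∈ AddSubgroup.closure (relSet n W) := by
  have h0 : single 0 1 ∈ AddSubgroup.closure (relSet n W) :=
    AddSubgroup.subset_closure (Or.inl (Or.inl rfl))
  have h1 : single (-1) 1 ∈ AddSubgroup.closure (relSet n W) :=
    AddSubgroup.subset_closure (Or.inl (Or.inr rfl))
  simp only [Set.mem_insert_iff, Set.mem_singleton_iff] at hk
  rcases hk with rfl | rfl | rfl | rfl
  · exact h1
  · exact h0
  · simpa using add_mem (single_sub_single_reflect_mem hn (W - 1)) h0
  · simpa using add_mem (single_sub_single_reflect_mem hn k) h1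

theorem single_upperRep_sub_single_mem (hn : Odd n) (k : ℤ) :
    single (upperRep W k) 1 - single k 1 ∈ AddSubgroup.closure (relSet n W) := by
  unfold upperRep
  split
  · simp
  · simpa using neg_mem (single_sub_single_reflect_mem hn k)

theorem ofCoords_toCoords_sub_mem (hn : Odd n) (x : LaurentGrp) :
    ofCoords W (toCoords W x) - x ∈ AddSubgroup.closure (relSet n W) := by
  induction x using Finsupp.induction_linear with
  | zero => simp
  | add x y hx hy => simpa [add_sub_add_comm] using add_mem hx hy
  | single k c =>
    rw [toCoords_single, map_zsmul, ← smul_single_one, ← zsmul_sub]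
    refine zsmul_mem ?_ c
    by_cases hk : upperRep W k ∈ ({-1, 0, W - 1, W} : Set ℤ)
    · rw [monomialCoord, dif_neg (not_not_intro hk), map_zero, zero_sub]
      simpa using sub_mem (single_mem_of_mem_excluded hn hk) (single_upperRep_sub_single_mem hn k)
    · rw [monomialCoord, dif_pos hk, ofCoords_single]
      exact single_upperRep_sub_single_mem hn k

end LambdaGrp

open LambdaGrp in
/-- For `n` odd, `Λ` is free abelian with basis the images of the monomials `t^k`
for `k ≥ (W-1)/2`, `k ∉ {-1, 0, W-1, W}`. -/
theorem stmt_0 (n W : ℤ) (hn : Odd n) :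
    ∃ b : Module.Basis {k : ℤ // W - 1 ≤ 2 * k ∧ k ∉ ({-1, 0, W - 1, W} : Set ℤ)} ℤ
        (LambdaGrp n W),
      ∀ k, b k = (QuotientAddGroup.mk (Finsupp.single k.1 1) : LambdaGrp n W) := by
  let e := QuotientAddGroup.equivOfRetract _ (toCoords W) (ofCoords W)
    (closure_le_ker_toCoords hn) (toCoords_ofCoords W) (ofCoords_toCoords_sub_mem hn)
  refine ⟨.ofRepr e.toIntLinearEquiv, fun k => ?_⟩
  rw [Module.Basis.coe_ofRepr]
  exact congrArg _ (ofCoords_single W k 1)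
end

section
/- Let n be an even integer and W an odd integer with |W| ≥ 3. Define Λ as the quotient of the additive group Z[t^{±1}] by the subgroup generated by t^0, t^{-1}, and t^k + (-1)^n t^{W-1-k} for all k ∈ Z. Then the image of t^{(W-1)/2} in Λ has order exactly 2, and Λ is isomorphic to Z/2Z ⊕ F where F is a free abelian group. -/
/-! The relators kill `t^0` and `t^{-1}`, hence also their mirror images `t^{W-1}` and `t^W`
under `k ↦ W - 1 - k`, and identify `t^{W-1-k}` with `-t^k`. The mirror fixes only
`m = (W - 1) / 2`, where the relation reads `2 t^m = 0`. So sending `t^m ↦ (1, 0)`,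
`t^k ↦ (0, e_k)` for `k > m` and `t^k ↦ (0, -e_{W-1-k})` for `k < m` (and the four vanishing
monomials to `0`) respects the relations, and the obvious map back is its inverse:
`Λ ≃ ℤ/2 × (free abelian group on the non-vanishing indices above m)`. As `|W| ≥ 3`, `t^m`
itself is not among the vanishing monomials. -/

namespace LambdaGrp

open Finsupp

variable {n W : ℤ}

def vanishingIdx (W : ℤ) : Finset ℤ := {0, -1, W - 1, W}

abbrev FreeIdx (W : ℤ) : Type := {k : ℤ // (W - 1) / 2 < k ∧ k ∉ vanishingIdx W}

lemma mem_vanishingIdx {k : ℤ} :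
    k ∈ vanishingIdx W ↔ k = 0 ∨ k = -1 ∨ k = W - 1 ∨ k = W := by
  simp [vanishingIdx]

noncomputable def freeSingle (W k : ℤ) : FreeIdx W →₀ ℤ :=
  if h : (W - 1) / 2 < k ∧ k ∉ vanishingIdx W then single ⟨k, h⟩ 1 else 0

noncomputable def splitImage (W k : ℤ) : ZMod 2 × (FreeIdx W →₀ ℤ) :=
  if k ∈ vanishingIdx W then 0
  else if k = (W - 1) / 2 then (1, 0)
  else if (W - 1) / 2 < k then (0, freeSingle W k)
  else (0, -freeSingle W (W - 1 - k))

lemma splitImage_reflect (hW : Odd W) (k : ℤ) :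
    splitImage W (W - 1 - k) = -splitImage W k := by
  obtain ⟨c, rfl⟩ := hW
  have hmid : (2 * c + 1 - 1) / 2 = c := by omega
  simp only [splitImage, mem_vanishingIdx, hmid]
  split_ifs <;> first | omega | simp

noncomputable def laurentToSplit (W : ℤ) : LaurentGrp →+ ZMod 2 × (FreeIdx W →₀ ℤ) :=
  liftAddHom fun k => zmultiplesHom _ (splitImage W k)

lemma laurentToSplit_single (k : ℤ) : laurentToSplit W (single k 1) = splitImage W k := by
  simp [laurentToSplit]

lemma closure_relSet_le_ker (hn : Even n) (hW : Odd W) :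
    AddSubgroup.closure (relSet n W) ≤ (laurentToSplit W).ker := by
  rw [AddSubgroup.closure_le]
  rintro x ((rfl | rfl) | ⟨k, rfl⟩)
  · simp [laurentToSplit_single, splitImage, vanishingIdx]
  · simp [laurentToSplit_single, splitImage, vanishingIdx]
  · simp [hn.neg_one_zpow, laurentToSplit_single, splitImage_reflect hW]

noncomputable def toSplit (hn : Even n) (hW : Odd W) :
    LambdaGrp n W →+ ZMod 2 × (FreeIdx W →₀ ℤ) :=
  QuotientAddGroup.lift _ (laurentToSplit W) (closure_relSet_le_ker hn hW)

lemma mk_single_add_mk_single_reflect (hn : Even n) (k : ℤ) :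
    ((single k 1 : LaurentGrp) : LambdaGrp n W) + (single (W - 1 - k) 1 : LaurentGrp) = 0 := by
  rw [← QuotientAddGroup.mk_add, QuotientAddGroup.eq_zero_iff]
  exact AddSubgroup.subset_closure (Or.inr ⟨k, by rw [hn.neg_one_zpow, Units.val_one]⟩)

lemma mk_single_eq_zero_of_mem_vanishingIdx (hn : Even n) {k : ℤ} (hk : k ∈ vanishingIdx W) :
    ((single k 1 : LaurentGrp) : LambdaGrp n W) = 0 := by
  have h0 : ((single 0 1 : LaurentGrp) : LambdaGrp n W) = 0 :=
    (QuotientAddGroup.eq_zero_iff _).2 (AddSubgroup.subset_closure (Or.inl (Or.inl rfl)))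
  have h1 : ((single (-1) 1 : LaurentGrp) : LambdaGrp n W) = 0 :=
    (QuotientAddGroup.eq_zero_iff _).2 (AddSubgroup.subset_closure (Or.inl (Or.inr rfl)))
  rcases mem_vanishingIdx.1 hk with rfl | rfl | rfl | hkW
  · exact h0
  · exact h1
  · simpa [h0] using mk_single_add_mk_single_reflect (W := W) hn 0
  · rw [hkW]
    simpa [h1] using mk_single_add_mk_single_reflect (W := W) hn (-1)

lemma two_nsmul_mk_single_mid (hn : Even n) (hW : Odd W) :
    2 • ((single ((W - 1) / 2) 1 : LaurentGrp) : LambdaGrp n W) = 0 := by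
  obtain ⟨c, hc⟩ := hW
  have h := mk_single_add_mk_single_reflect (W := W) hn ((W - 1) / 2)
  rwa [show W - 1 - (W - 1) / 2 = (W - 1) / 2 by omega, ← two_nsmul] at h

noncomputable def ofSplit (hn : Even n) (hW : Odd W) :
    ZMod 2 × (FreeIdx W →₀ ℤ) →+ LambdaGrp n W :=
  (ZMod.lift 2 ⟨zmultiplesHom _ ((single ((W - 1) / 2) 1 : LaurentGrp) : LambdaGrp n W),
      by rw [zmultiplesHom_apply, natCast_zsmul, two_nsmul_mk_single_mid hn hW]⟩).coprod
    (liftAddHom fun s : FreeIdx W => zmultiplesHom _ ((single s.1 1 : LaurentGrp) : LambdaGrp n W))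

lemma ofSplit_one_zero (hn : Even n) (hW : Odd W) :
    ofSplit hn hW (1, 0) = ((single ((W - 1) / 2) 1 : LaurentGrp) : LambdaGrp n W) := by
  simp only [ofSplit, AddMonoidHom.coprod_apply, map_zero, add_zero]
  exact (ZMod.lift_coe _ _ 1).trans (one_zsmul _)

lemma ofSplit_zero_single (hn : Even n) (hW : Odd W) (s : FreeIdx W) :
    ofSplit hn hW (0, single s 1) = ((single s.1 1 : LaurentGrp) : LambdaGrp n W) := by
  simp [ofSplit]

lemma ofSplit_splitImage (hn : Even n) (hW : Odd W) (k : ℤ) :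
    ofSplit hn hW (splitImage W k) = ((single k 1 : LaurentGrp) : LambdaGrp n W) := by
  unfold splitImage
  split_ifs with hvan hmid hlt
  · rw [map_zero, mk_single_eq_zero_of_mem_vanishingIdx hn hvan]
  · rw [hmid, ofSplit_one_zero]
  · rw [freeSingle, dif_pos ⟨hlt, hvan⟩, ofSplit_zero_single]
  · have hrefl : (W - 1) / 2 < W - 1 - k ∧ W - 1 - k ∉ vanishingIdx W := by
      obtain ⟨c, hc⟩ := hW
      rw [mem_vanishingIdx] at hvan ⊢
      omega
    rw [freeSingle, dif_pos hrefl, ← neg_zero, ← Prod.neg_mk, map_neg, ofSplit_zero_single]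
    exact neg_eq_of_add_eq_zero_left (mk_single_add_mk_single_reflect hn k)


lemma splitImage_freeIdx (s : FreeIdx W) : splitImage W s = (0, single s 1) := by
  obtain ⟨k, hlt, hvan⟩ := s
  simp [splitImage, freeSingle, hlt, hvan, hlt.ne']

lemma splitImage_mid (hW : Odd W) (hW3 : 3 ≤ |W|) : splitImage W ((W - 1) / 2) = (1, 0) := by
  have hmid : (W - 1) / 2 ∉ vanishingIdx W := by
    obtain ⟨c, hc⟩ := hW
    rw [mem_vanishingIdx]
    cases abs_cases W <;> omega
  simp [splitImage, hmid]

lemma toSplit_mk_single (hn : Even n) (hW : Odd W) (k : ℤ) :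
    toSplit hn hW ((single k 1 : LaurentGrp) : LambdaGrp n W) = splitImage W k := by
  rw [toSplit, QuotientAddGroup.lift_mk, laurentToSplit_single]

lemma ofSplit_toSplit (hn : Even n) (hW : Odd W) (x : LambdaGrp n W) :
    ofSplit hn hW (toSplit hn hW x) = x := by
  obtain ⟨x, rfl⟩ := QuotientAddGroup.mk_surjective x
  induction x using Finsupp.induction_linear with
  | zero => simp
  | add x y hx hy => simp only [QuotientAddGroup.mk_add, map_add, hx, hy]
  | single k z =>
    rw [← smul_single_one, QuotientAddGroup.mk_zsmul, map_zsmul, map_zsmul,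
      toSplit_mk_single, ofSplit_splitImage]

lemma toSplit_ofSplit (hn : Even n) (hW : Odd W) (hW3 : 3 ≤ |W|)
    (y : ZMod 2 × (FreeIdx W →₀ ℤ)) : toSplit hn hW (ofSplit hn hW y) = y := by
  have hfree (s : FreeIdx W →₀ ℤ) : toSplit hn hW (ofSplit hn hW (0, s)) = (0, s) := by
    induction s using Finsupp.induction_linear with
    | zero => rw [Prod.mk_zero_zero, map_zero, map_zero]
    | add s t hs ht => rw [← zero_add (0 : ZMod 2), ← Prod.mk_add_mk, map_add, map_add, hs, ht]
    | single s z =>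
      rw [← smul_single_one, ← smul_zero z, ← Prod.smul_mk, map_zsmul, map_zsmul,
        ofSplit_zero_single, toSplit_mk_single, splitImage_freeIdx]
  obtain ⟨a, s⟩ := y
  obtain ⟨z, rfl⟩ := ZMod.intCast_surjective a
  rw [show ((z : ZMod 2), s) = z • (1, 0) + (0, s) by simp, map_add, map_add, map_zsmul,
    map_zsmul, ofSplit_one_zero, toSplit_mk_single, splitImage_mid hW hW3, hfree]

noncomputable def equivSplit (hn : Even n) (hW : Odd W) (hW3 : 3 ≤ |W|) :
    LambdaGrp n W ≃+ ZMod 2 × (FreeIdx W →₀ ℤ) where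
  toFun := toSplit hn hW
  invFun := ofSplit hn hW
  left_inv := ofSplit_toSplit hn hW
  right_inv := toSplit_ofSplit hn hW hW3
  map_add' := map_add _

end LambdaGrp

/-- For `n` even and `W` odd with `|W| ≥ 3`, the image of `t^{(W-1)/2}` in `Λ` has
order exactly 2, and `Λ ≅ ℤ/2 ⊕ F` with `F` free abelian. -/
theorem stmt_1 (n W : ℤ) (hn : Even n) (hW : Odd W) (hW3 : 3 ≤ |W|) :
    addOrderOf
        ((QuotientAddGroup.mk (Finsupp.single ((W - 1) / 2) 1) : LambdaGrp n W)) = 2 ∧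
      ∃ (F : Type) (_ : AddCommGroup F), Module.Free ℤ F ∧
        Nonempty (LambdaGrp n W ≃+ (ZMod 2 × F)) := by
  have hmid :
      LambdaGrp.equivSplit hn hW hW3 (Finsupp.single ((W - 1) / 2) 1 : LaurentGrp) = (1, 0) :=
    (LambdaGrp.toSplit_mk_single hn hW _).trans (LambdaGrp.splitImage_mid hW hW3)
  refine ⟨?_, _, inferInstance, inferInstance, ⟨LambdaGrp.equivSplit hn hW hW3⟩⟩
  rw [← (LambdaGrp.equivSplit hn hW hW3).addOrderOf_eq, hmid, Prod.addOrderOf_mk,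
    ZMod.addOrderOf_one, addOrderOf_zero, Nat.lcm_one_right]
end

section
/- Let n be an integer, W a positive integer, and let Λ be the quotient of the additive group Z[t^{±1}] by the subgroup generated by t^0, t^{-1}, and t^k + (-1)^n t^{W-1-k} for all k ∈ Z. Then the subgroup of Λ generated by the images of {t^k − t^{k-1} : 0 ≤ k ≤ W−1} equals the subgroup generated by the images of {t^j : 1 ≤ j ≤ W−2}. -/
lemma mk_zero_of_mem {n W : ℤ} {x : LaurentGrp} (hx : x ∈ AddSubgroup.closure (relSet n W)) :
    (QuotientAddGroup.mk x : LambdaGrp n W) = 0 :=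
  (QuotientAddGroup.eq_zero_iff x).2 hx

lemma mk_single_zero (n W : ℤ) :
    (QuotientAddGroup.mk (Finsupp.single 0 1) : LambdaGrp n W) = 0 :=
  mk_zero_of_mem (AddSubgroup.subset_closure (Or.inl (Or.inl rfl)))

lemma mk_single_neg_one (n W : ℤ) :
    (QuotientAddGroup.mk (Finsupp.single (-1) 1) : LambdaGrp n W) = 0 :=
  mk_zero_of_mem (AddSubgroup.subset_closure (Or.inl (Or.inr rfl)))

lemma mk_single_Wsub1 (n W : ℤ) :
    (QuotientAddGroup.mk (Finsupp.single (W - 1) 1) : LambdaGrp n W) = 0 := by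
  apply mk_zero_of_mem
  have h1 : Finsupp.single (W - 1) 1 +
      Finsupp.single (W - 1 - (W - 1)) (((-1 : ℤˣ) ^ n : ℤˣ) : ℤ) ∈
      AddSubgroup.closure (relSet n W) :=
    AddSubgroup.subset_closure (Or.inr ⟨W - 1, rfl⟩)
  have h2 : Finsupp.single (W - 1 - (W - 1)) (((-1 : ℤˣ) ^ n : ℤˣ) : ℤ) ∈
      AddSubgroup.closure (relSet n W) := by
    have h0 : (Finsupp.single 0 1 : LaurentGrp) ∈ AddSubgroup.closure (relSet n W) :=
      AddSubgroup.subset_closure (Or.inl (Or.inl rfl))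
    have := AddSubgroup.zsmul_mem _ h0 (((-1 : ℤˣ) ^ n : ℤˣ) : ℤ)
    have heq : (((-1 : ℤˣ) ^ n : ℤˣ) : ℤ) • (Finsupp.single 0 1 : LaurentGrp) =
        Finsupp.single (W - 1 - (W - 1)) (((-1 : ℤˣ) ^ n : ℤˣ) : ℤ) := by
      rw [Finsupp.smul_single, smul_eq_mul, mul_one]
      congr 1
      ring
    rwa [heq] at this
  have := AddSubgroup.sub_mem _ h1 h2
  simpa using this

/-- For `W > 0`, the subgroup of `Λ` generated by the images of
`{t^k - t^{k-1} : 0 ≤ k ≤ W-1}` equals that generated by the images of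
`{t^j : 1 ≤ j ≤ W-2}`. -/
theorem stmt_4 (n W : ℤ) (hW : 0 < W) :
    AddSubgroup.closure
        {x : LambdaGrp n W | ∃ k : ℤ, 0 ≤ k ∧ k ≤ W - 1 ∧
          x = (QuotientAddGroup.mk
            (Finsupp.single k 1 - Finsupp.single (k - 1) 1) : LambdaGrp n W)} =
      AddSubgroup.closure
        {x : LambdaGrp n W | ∃ j : ℤ, 1 ≤ j ∧ j ≤ W - 2 ∧
          x = (QuotientAddGroup.mk (Finsupp.single j 1) : LambdaGrp n W)} := by
  set L := {x : LambdaGrp n W | ∃ k : ℤ, 0 ≤ k ∧ k ≤ W - 1 ∧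
      x = (QuotientAddGroup.mk
        (Finsupp.single k 1 - Finsupp.single (k - 1) 1) : LambdaGrp n W)} with hL
  set R := {x : LambdaGrp n W | ∃ j : ℤ, 1 ≤ j ∧ j ≤ W - 2 ∧
      x = (QuotientAddGroup.mk (Finsupp.single j 1) : LambdaGrp n W)} with hR
  -- Key fact: for -1 ≤ i ≤ W-1, t^i lies in closure R.
  have hsingle : ∀ i : ℤ, -1 ≤ i → i ≤ W - 1 →
      (QuotientAddGroup.mk (Finsupp.single i 1) : LambdaGrp n W) ∈
        AddSubgroup.closure R := by
    intro i h1 h2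
    rcases eq_or_ne i (-1) with rfl | hne1
    · rw [mk_single_neg_one]; exact zero_mem _
    rcases eq_or_ne i 0 with rfl | hne0
    · rw [mk_single_zero]; exact zero_mem _
    rcases eq_or_ne i (W - 1) with rfl | hneW
    · rw [mk_single_Wsub1]; exact zero_mem _
    · exact AddSubgroup.subset_closure ⟨i, by omega, by omega, rfl⟩
  apply le_antisymm
  · rw [AddSubgroup.closure_le]
    rintro x ⟨k, hk0, hkW, rfl⟩
    have : (QuotientAddGroup.mk
        (Finsupp.single k 1 - Finsupp.single (k - 1) 1) : LambdaGrp n W) =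
        (QuotientAddGroup.mk (Finsupp.single k 1) : LambdaGrp n W) -
        (QuotientAddGroup.mk (Finsupp.single (k - 1) 1) : LambdaGrp n W) := rfl
    rw [this]
    exact AddSubgroup.sub_mem _ (hsingle k (by omega) hkW)
      (hsingle (k - 1) (by omega) (by omega))
  · rw [AddSubgroup.closure_le]
    rintro x ⟨j, hj1, hjW, rfl⟩
    -- telescoping: t^(m-1) ∈ closure L for all natural m with m-1 ≤ W-1
    have aux : ∀ m : ℕ, (m : ℤ) - 1 ≤ W - 1 →
        (QuotientAddGroup.mk (Finsupp.single ((m : ℤ) - 1) 1) : LambdaGrp n W) ∈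
          AddSubgroup.closure L := by
      intro m
      induction m with
      | zero =>
        intro _
        have : ((0 : ℕ) : ℤ) - 1 = -1 := by norm_num
        rw [this, mk_single_neg_one]; exact zero_mem _
      | succ m ih =>
        intro hm
        have hk : ((m + 1 : ℕ) : ℤ) - 1 = (m : ℤ) := by push_cast; ring
        rw [hk]
        have hmem : (QuotientAddGroup.mk
            (Finsupp.single (m : ℤ) 1 - Finsupp.single ((m : ℤ) - 1) 1) :
            LambdaGrp n W) ∈ AddSubgroup.closure L :=
          AddSubgroup.subset_closure ⟨(m : ℤ), by positivity, by omega, rfl⟩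
        have ih' := ih (by omega)
        have := AddSubgroup.add_mem _ hmem ih'
        have heq : (QuotientAddGroup.mk
            (Finsupp.single (m : ℤ) 1 - Finsupp.single ((m : ℤ) - 1) 1) : LambdaGrp n W) +
            (QuotientAddGroup.mk (Finsupp.single ((m : ℤ) - 1) 1) : LambdaGrp n W) =
            (QuotientAddGroup.mk (Finsupp.single (m : ℤ) 1) : LambdaGrp n W) := by
          rw [← QuotientAddGroup.mk_add]
          congr 1
          abel
        rwa [heq] at this
    have hj' : ((j + 1).toNat : ℤ) - 1 = j := by omega
    have := aux (j + 1).toNat (by omega)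
    rwa [hj'] at this
end

section
/- Let G be the subgroup of Aut(Z²) generated by R(α,β) = (α−β, α) and S(α,β) = (−β, −α). Every G-orbit of a nonzero element (α,β) ∈ Z² has cardinality 6 or 12, and it has cardinality exactly 6 if and only if at least one of the following holds: α = 0, β = 0, α = β, α + β = 0, 2α = β, or 2β = α. -/
/-! In the basis of the Eisenstein lattice, `R` is the rotation by 60° and `S` a reflection, so
the orbit of `v` is the union of the rotation orbits of `v` and of `S v`. A nonzero vector is
fixed by no nontrivial rotation, hence each rotation orbit has six points, and two rotation
orbits either coincide or are disjoint. They coincide iff `S v = Rᵏ v` for some `k < 6`, i.e.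
iff `v` lies on the mirror of one of the six reflections `R⁻ᵏ S`: these mirrors are the six
lines of the statement. -/

open Set Function

theorem AddAut.mapsTo_of_mem_closure {M : Type*} [Add M] {s : Set (AddAut M)} {T : Set M}
    (hT : T.Finite) (hs : ∀ g ∈ s, MapsTo g T T) {g : AddAut M}
    (hg : g ∈ AddSubgroup.closure s) : MapsTo g T T := by
  induction hg using AddSubgroup.closure_induction with
  | mem g hg => exact hs g hg
  | zero => exact mapsTo_id T
  | add g h _ _ hg hh => exact hg.comp hh
  | neg g _ hg =>
    have hsurj : SurjOn g T T :=
      ((hT.injOn_iff_bijOn_of_mapsTo hg).1 g.injective.injOn).surjOn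
    intro w hw
    obtain ⟨u, hu, rfl⟩ := hsurj hw
    simpa using hu

namespace HexLattice

def rotate (p : ℤ × ℤ) : ℤ × ℤ := (p.1 - p.2, p.1)

def reflect (p : ℤ × ℤ) : ℤ × ℤ := (-p.2, -p.1)

theorem isPeriodicPt_rotate (p : ℤ × ℤ) : IsPeriodicPt rotate 6 p := by
  simp [IsPeriodicPt, IsFixedPt, rotate, iterate_succ_apply']

theorem reflect_reflect (p : ℤ × ℤ) : reflect (reflect p) = p := by
  simp [reflect]

theorem reflect_eq_zero_iff {p : ℤ × ℤ} : reflect p = 0 ↔ p = 0 := by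
  simp [reflect, Prod.ext_iff, and_comm]

theorem semiconj_reflect_rotate : Semiconj reflect rotate rotate^[5] := by
  intro p
  simp [reflect, rotate, iterate_succ_apply']

theorem rotate_iterate_ne_self {p : ℤ × ℤ} (hp : p ≠ 0) {k : ℕ} (hk0 : 0 < k) (hk : k < 6) :
    rotate^[k] p ≠ p := by
  obtain ⟨a, b⟩ := p
  simp only [ne_eq, Prod.ext_iff, Prod.fst_zero, Prod.snd_zero, not_and_or] at hp
  interval_cases k <;> simp [rotate, iterate_succ_apply', Prod.ext_iff] <;> omega

theorem minimalPeriod_rotate {p : ℤ × ℤ} (hp : p ≠ 0) : minimalPeriod rotate p = 6 := by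
  have hdvd := (isPeriodicPt_rotate p).minimalPeriod_dvd
  have hpos := (isPeriodicPt_rotate p).minimalPeriod_pos (by norm_num)
  by_contra hne
  exact rotate_iterate_ne_self hp hpos (lt_of_le_of_ne (Nat.le_of_dvd (by norm_num) hdvd) hne)
    iterate_minimalPeriod

def rotOrbit (p : ℤ × ℤ) : Set (ℤ × ℤ) := range (rotate^[·] p)

theorem mem_rotOrbit_self (p : ℤ × ℤ) : p ∈ rotOrbit p := ⟨0, rfl⟩

theorem rotOrbit_eq_image (p : ℤ × ℤ) : rotOrbit p = (rotate^[·] p) '' Iio 6 := by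
  refine subset_antisymm ?_ (image_subset_range _ _)
  rintro _ ⟨k, rfl⟩
  exact ⟨k % 6, Nat.mod_lt k (by norm_num), (isPeriodicPt_rotate p).iterate_mod_apply k⟩

theorem rotOrbit_finite (p : ℤ × ℤ) : (rotOrbit p).Finite := by
  rw [rotOrbit_eq_image]
  exact (finite_Iio 6).image _

theorem ncard_rotOrbit {p : ℤ × ℤ} (hp : p ≠ 0) : (rotOrbit p).ncard = 6 := by
  rw [rotOrbit_eq_image, InjOn.ncard_image, ncard_Iio_nat]
  simpa [minimalPeriod_rotate hp] using iterate_injOn_Iio_minimalPeriod (f := rotate) (x := p)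

theorem rotOrbit_subset_of_mem {p q : ℤ × ℤ} (h : q ∈ rotOrbit p) : rotOrbit q ⊆ rotOrbit p := by
  obtain ⟨k, rfl⟩ := h
  rintro _ ⟨j, rfl⟩
  exact ⟨j + k, iterate_add_apply _ _ _ _⟩

theorem mem_rotOrbit_comm {p q : ℤ × ℤ} (h : q ∈ rotOrbit p) : p ∈ rotOrbit q := by
  obtain ⟨k, rfl⟩ := h
  refine ⟨5 * k, ?_⟩
  dsimp only
  rw [← iterate_add_apply, show 5 * k + k = 6 * k by ring]
  exact (isPeriodicPt_rotate p).mul_const k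

theorem mapsTo_rotate_rotOrbit (p : ℤ × ℤ) : MapsTo rotate (rotOrbit p) (rotOrbit p) := by
  rintro _ ⟨k, rfl⟩
  exact ⟨k + 1, iterate_succ_apply' _ _ _⟩

theorem mapsTo_reflect_rotOrbit (p : ℤ × ℤ) :
    MapsTo reflect (rotOrbit p) (rotOrbit (reflect p)) := by
  rintro _ ⟨k, rfl⟩
  exact ⟨5 * k, by simp only [iterate_mul, (semiconj_reflect_rotate.iterate_right k).eq]⟩

theorem reflect_mem_rotOrbit_iff {p : ℤ × ℤ} : reflect p ∈ rotOrbit p ↔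
    p.1 = 0 ∨ p.2 = 0 ∨ p.1 = p.2 ∨ p.1 + p.2 = 0 ∨ 2 * p.1 = p.2 ∨ 2 * p.2 = p.1 := by
  obtain ⟨a, b⟩ := p
  simp only [rotOrbit_eq_image, mem_image, mem_Iio]
  simp only [Nat.lt_succ_iff_lt_or_eq, Nat.not_lt_zero, or_and_right, exists_or, false_or,
    exists_eq_left, rotate, reflect, iterate_succ_apply',
    iterate_zero_apply, Prod.mk.injEq]
  omega

def hexOrbit (p : ℤ × ℤ) : Set (ℤ × ℤ) := rotOrbit p ∪ rotOrbit (reflect p)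

theorem mem_hexOrbit_self (p : ℤ × ℤ) : p ∈ hexOrbit p := Or.inl (mem_rotOrbit_self p)

theorem hexOrbit_finite (p : ℤ × ℤ) : (hexOrbit p).Finite :=
  (rotOrbit_finite p).union (rotOrbit_finite _)

theorem mapsTo_rotate_hexOrbit (p : ℤ × ℤ) : MapsTo rotate (hexOrbit p) (hexOrbit p) :=
  (mapsTo_rotate_rotOrbit p).union_union (mapsTo_rotate_rotOrbit _)

theorem mapsTo_reflect_hexOrbit (p : ℤ × ℤ) : MapsTo reflect (hexOrbit p) (hexOrbit p) := by
  rintro q (hq | hq)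
  · exact Or.inr (mapsTo_reflect_rotOrbit p hq)
  · exact Or.inl (reflect_reflect p ▸ mapsTo_reflect_rotOrbit _ hq)

theorem hexOrbit_subset {p : ℤ × ℤ} {T : Set (ℤ × ℤ)} (hp : p ∈ T)
    (hrot : MapsTo rotate T T) (hrefl : MapsTo reflect T T) : hexOrbit p ⊆ T := by
  rintro _ (⟨k, rfl⟩ | ⟨k, rfl⟩)
  · exact hrot.iterate k hp
  · exact hrot.iterate k (hrefl hp)

theorem ncard_hexOrbit_of_mem {p : ℤ × ℤ} (hp : p ≠ 0) (h : reflect p ∈ rotOrbit p) :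
    (hexOrbit p).ncard = 6 := by
  rw [hexOrbit, union_eq_left.2 (rotOrbit_subset_of_mem h), ncard_rotOrbit hp]

theorem ncard_hexOrbit_of_notMem {p : ℤ × ℤ} (hp : p ≠ 0) (h : reflect p ∉ rotOrbit p) :
    (hexOrbit p).ncard = 12 := by
  have hdisj : Disjoint (rotOrbit p) (rotOrbit (reflect p)) :=
    disjoint_left.2 fun q hq hq' => h (rotOrbit_subset_of_mem hq (mem_rotOrbit_comm hq'))
  rw [hexOrbit, ncard_union_eq hdisj (rotOrbit_finite _) (rotOrbit_finite _), ncard_rotOrbit hp,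
      ncard_rotOrbit (reflect_eq_zero_iff.not.2 hp)]

end HexLattice

open HexLattice in
/-- For the dihedral group `G ≤ Aut(ℤ²)` generated by `R(α,β) = (α-β,α)` and
`S(α,β) = (-β,-α)`, every orbit of a nonzero `v = (α,β) ∈ ℤ²` has cardinality 6 or 12,
and it has cardinality 6 iff `α = 0`, `β = 0`, `α = β`, `α + β = 0`, `2α = β`,
or `2β = α`. -/
theorem stmt_7 (R S : AddAut (ℤ × ℤ))
    (hR : ∀ p : ℤ × ℤ, R p = (p.1 - p.2, p.1))
    (hS : ∀ p : ℤ × ℤ, S p = (-p.2, -p.1))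
    (v : ℤ × ℤ) (hv : v ≠ 0) :
    ({y : ℤ × ℤ | ∃ g ∈ AddSubgroup.closure ({R, S} : Set (AddAut (ℤ × ℤ))), g v = y}.ncard = 6 ∨
      {y : ℤ × ℤ | ∃ g ∈ AddSubgroup.closure ({R, S} : Set (AddAut (ℤ × ℤ))), g v = y}.ncard = 12) ∧
    ({y : ℤ × ℤ | ∃ g ∈ AddSubgroup.closure ({R, S} : Set (AddAut (ℤ × ℤ))), g v = y}.ncard = 6 ↔
      (v.1 = 0 ∨ v.2 = 0 ∨ v.1 = v.2 ∨ v.1 + v.2 = 0 ∨ 2 * v.1 = v.2 ∨ 2 * v.2 = v.1)) := by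
  set G := AddSubgroup.closure ({R, S} : Set (AddAut (ℤ × ℤ)))
  have hRG : R ∈ G := AddSubgroup.subset_closure (by simp)
  have hSG : S ∈ G := AddSubgroup.subset_closure (by simp)
  have hRrot : ⇑R = rotate := funext hR
  have hSrefl : ⇑S = reflect := funext hS
  have horbit : {y | ∃ g ∈ G, g v = y} = hexOrbit v := by
    refine subset_antisymm ?_ (hexOrbit_subset ⟨0, zero_mem G, rfl⟩ ?_ ?_)
    · rintro _ ⟨g, hg, rfl⟩
      refine AddAut.mapsTo_of_mem_closure (hexOrbit_finite v) ?_ hg (mem_hexOrbit_self v)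
      rintro _ (rfl | rfl)
      · exact hRrot ▸ mapsTo_rotate_hexOrbit v
      · exact hSrefl ▸ mapsTo_reflect_hexOrbit v
    · rintro _ ⟨g, hg, rfl⟩
      exact ⟨R + g, add_mem hRG hg, by rw [AddAut.add_apply, hRrot]⟩
    · rintro _ ⟨g, hg, rfl⟩
      exact ⟨S + g, add_mem hSG hg, by rw [AddAut.add_apply, hSrefl]⟩
  rw [horbit, ← reflect_mem_rotOrbit_iff]
  by_cases h : reflect v ∈ rotOrbit v
  · simp [ncard_hexOrbit_of_mem hv h, h]
  · simp [ncard_hexOrbit_of_notMem hv h, h]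
end

section
/- Let A be an abelian group and G, G* : Z × Z → A functions satisfying: (a) G*(p,q) = −G(p, p−q) for all p, q, and (b) −G(−q, p) + G(p, −q) = −G*(−q, p) + G*(p, −q) for all p, q. Then the hexagon relation holds: G(p,q) + G(p, p−q) = G(q,p) + G(q, q−p) for all integers p, q. -/
/-- If `G*(p,q) = -G(p, p-q)` and `-G(-q,p) + G(p,-q) = -G*(-q,p) + G*(p,-q)`
for all `p, q`, then the hexagon relation
`G(p,q) + G(p,p-q) = G(q,p) + G(q,q-p)` holds. -/
theorem stmt_11 {A : Type*} [AddCommGroup A] (G Gs : ℤ → ℤ → A)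
    (ha : ∀ p q : ℤ, Gs p q = -G p (p - q))
    (hb : ∀ p q : ℤ, -G (-q) p + G p (-q) = -Gs (-q) p + Gs p (-q)) :
    ∀ p q : ℤ, G p q + G p (p - q) = G q p + G q (q - p) := by
  intro p q
  have h := hb p (-q)
  simp only [neg_neg, ha] at h
  calc G p q + G p (p - q)
      = G q p + (-G q p + G p q) + G p (p - q) := by abel
    _ = G q p + G q (q - p) := by rw [h]; abel
end

section
/- Let A be an abelian group, k ≥ 2 an integer, and D : Z × Z → A a function satisfying D(p,−p) = 0, D(p,q) = D(q,p), and D(−p,−q) = −D(p,q) for all integers p, q. Define: I(p,q) = D(p,−q); II_b(p,q) = D(−q,p) − D(p−q,−p); II_be(p,q) = D(−q,p) − D(−p−q,p) − D(p−q,−p) + D(−q,−p); II_r(p,q) = D(p,−q) − D(p−q,q); II_re(p,q) = D(p,−q) − D(p+q,−q) − D(p−q,q) + D(p,q). For 1 ≤ p, q ≤ k−1 define F(p,q) = p·II_re(p,q) + q·II_be(p,q) if p+q < k, and F(p,q) = (k−p−1)·II_b(p,q) + (k−q−1)·II_r(p,q) + (p+q+1−k)·I(p,q) if p+q ≥ k.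 Then F(p,q) = −F(q,p) for all 1 ≤ p, q ≤ k−1; in particular the sum of F(p,q) over all 1 ≤ p, q ≤ k−1 equals 0. -/
/-- Skew-symmetry of the matrix `F_k`: given `D` with `D(p,-p) = 0`, `D(p,q) = D(q,p)`,
`D(-p,-q) = -D(p,q)`, and `F` defined for `1 ≤ p,q ≤ k-1` by
`F(p,q) = p·II_re(p,q) + q·II_be(p,q)` if `p+q < k` and
`F(p,q) = (k-p-1)·II_b(p,q) + (k-q-1)·II_r(p,q) + (p+q+1-k)·I(p,q)` if `p+q ≥ k`,
one has `F(p,q) = -F(q,p)`; in particular `∑ F(p,q) = 0`. -/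
theorem stmt_12 {A : Type*} [AddCommGroup A] (k : ℤ) (hk : 2 ≤ k) (D F : ℤ → ℤ → A)
    (hD1 : ∀ p : ℤ, D p (-p) = 0)
    (hD2 : ∀ p q : ℤ, D p q = D q p)
    (hD3 : ∀ p q : ℤ, D (-p) (-q) = -D p q)
    (hF1 : ∀ p q : ℤ, 1 ≤ p → p ≤ k - 1 → 1 ≤ q → q ≤ k - 1 → p + q < k →
      F p q = p • (D p (-q) - D (p + q) (-q) - D (p - q) q + D p q) +
        q • (D (-q) p - D (-p - q) p - D (p - q) (-p) + D (-q) (-p)))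
    (hF2 : ∀ p q : ℤ, 1 ≤ p → p ≤ k - 1 → 1 ≤ q → q ≤ k - 1 → k ≤ p + q →
      F p q = (k - p - 1) • (D (-q) p - D (p - q) (-p)) +
        (k - q - 1) • (D p (-q) - D (p - q) q) + (p + q + 1 - k) • D p (-q)) :
    (∀ p q : ℤ, 1 ≤ p → p ≤ k - 1 → 1 ≤ q → q ≤ k - 1 → F p q = -F q p) ∧
      ∑ p ∈ Finset.Icc (1 : ℤ) (k - 1), ∑ q ∈ Finset.Icc (1 : ℤ) (k - 1), F p q = 0 := by
  have h4 : ∀ a b : ℤ, D (-a) b = -D a (-b) := fun a b => by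
    have := hD3 a (-b); simpa using this
  have h0 : D (0 : ℤ) (-0 : ℤ) = 0 := hD1 0
  have hskew : ∀ p q : ℤ, 1 ≤ p → p ≤ k - 1 → 1 ≤ q → q ≤ k - 1 → F p q = -F q p := by
    intro p q hp1 hp2 hq1 hq2
    rcases lt_or_ge (p + q) k with hlt | hge
    · rw [hF1 p q hp1 hp2 hq1 hq2 hlt, hF1 q p hq1 hq2 hp1 hp2 (by linarith)]
      have e1 : D (-q) p = D p (-q) := hD2 (-q) p
      have e2 : D (-p - q) p = -D (p + q) (-p) := by
        have := h4 (p + q) p; rw [show -(p+q) = -p - q by ring] at this; exact this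
      have e3 : D (-q) (-p) = -D p q := by rw [hD3, hD2]
      have e4 : D q (-p) = -D p (-q) := by rw [hD2, h4]
      have e5 : D (q + p) (-p) = D (p + q) (-p) := by rw [show q + p = p + q by ring]
      have e6 : D (q - p) p = -D (p - q) (-p) := by
        have := h4 (p - q) p; rw [show -(p-q) = q - p by ring] at this; exact this
      have e7 : D q p = D p q := hD2 q p
      have e8 : D (-p) q = -D p (-q) := h4 p q
      have e9 : D (-q - p) q = -D (p + q) (-q) := by
        have := h4 (p + q) q; rw [show -(p+q) = -q - p by ring] at this; exact this
      have e10 : D (q - p) (-q) = -D (p - q) q := by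
        have := h4 (p - q) (-q); rw [show -(p-q) = q - p by ring, neg_neg] at this
        exact this
      have e11 : D (-p) (-q) = -D p q := hD3 p q
      rw [e1, e2, e3, e4, e5, e6, e7, e8, e9, e10, e11]
      module
    · rw [hF2 p q hp1 hp2 hq1 hq2 hge, hF2 q p hq1 hq2 hp1 hp2 (by linarith)]
      have e1 : D (-q) p = D p (-q) := hD2 (-q) p
      have e2 : D (-p) q = -D p (-q) := h4 p q
      have e3 : D (q - p) (-q) = -D (p - q) q := by
        have := h4 (p - q) (-q); rw [show -(p-q) = q - p by ring, neg_neg] at this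
        exact this
      have e4 : D q (-p) = -D p (-q) := by rw [hD2, h4]
      have e6 : D (q - p) p = -D (p - q) (-p) := by
        have := h4 (p - q) p; rw [show -(p-q) = q - p by ring] at this; exact this
      rw [e1, e2, e3, e4, e6]
      module
  have hdiag : ∀ p : ℤ, 1 ≤ p → p ≤ k - 1 → F p p = 0 := by
    intro p hp1 hp2
    have a1 : D p (-p) = 0 := hD1 p
    have a2 : D (-p) p = 0 := by rw [hD2]; exact hD1 p
    have a5 : D (-p) (-p) = -D p p := hD3 p p
    have a6 : D (0 : ℤ) (-p) = -D 0 p := by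
      have := hD3 0 p; simpa using this
    rcases lt_or_ge (p + p) k with hlt | hge
    · rw [hF1 p p hp1 hp2 hp1 hp2 hlt]
      have a3 : D (-p - p) p = -D (p + p) (-p) := by
        have := h4 (p + p) p; rw [show -(p+p) = -p - p by ring] at this; exact this
      simp only [sub_self] at *
      rw [a1, a2, a3, a5, a6]
      module
    · rw [hF2 p p hp1 hp2 hp1 hp2 hge]
      simp only [sub_self] at *
      rw [a1, a2, a6]
      module
  refine ⟨hskew, ?_⟩
  rw [← Finset.sum_product']
  refine Finset.sum_involution (fun x _ => (x.2, x.1)) ?_ ?_ ?_ ?_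
  · rintro ⟨p, q⟩ h
    simp only [Finset.mem_product, Finset.mem_Icc] at h
    have := hskew p q h.1.1 h.1.2 h.2.1 h.2.2
    simp [this]
  · rintro ⟨p, q⟩ ha h hc
    simp only [Finset.mem_product, Finset.mem_Icc] at ha
    have hqp : q = p := congrArg Prod.fst hc
    subst hqp
    exact h (hdiag q ha.1.1 ha.1.2)
  · rintro ⟨p, q⟩ h
    simp only [Finset.mem_product, Finset.mem_Icc] at h ⊢
    exact ⟨h.2, h.1⟩
  · rintro ⟨p, q⟩ h
    rfl
end

section
/- Let V be the rational vector space with basis {e_{p,q} : (p,q) ∈ Z²}, and let K ⊆ V be the subspace spanned by the elements e_{p,q} + e_{p,p−q} − e_{q,p} − e_{q,q−p} for all (p,q) ∈ Z². For each integer k ≥ 4 define v_k = (k−1)·(e_{k−2,k−1} − e_{k−1,k−2} + e_{1−k,2−k} − e_{2−k,1−k}) − (−e_{k−2,−1} + e_{2−k,1} − e_{1,2−k} + e_{−1,k−2}). Then the images of v_4, v_5, v_6, ... in the quotient V/K are linearly independent over Q. -/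
/-- The rational vector space with basis `{e_{p,q} : (p,q) ∈ ℤ²}`. -/
abbrev V14 : Type := (ℤ × ℤ) →₀ ℚ

/-- The basis vector `e_{p,q}`. -/
noncomputable def e14 (v : ℤ × ℤ) : V14 := Finsupp.single v 1

/-- The subspace spanned by the hexagon relators
`e_{p,q} + e_{p,p-q} - e_{q,p} - e_{q,q-p}`. -/
noncomputable def K14 : Submodule ℚ V14 :=
  Submodule.span ℚ
    {x | ∃ p q : ℤ, x = e14 (p, q) + e14 (p, p - q) - e14 (q, p) - e14 (q, q - p)}

/-- The dual-basis-like coefficient function: `1` at `(k-2,k-1)`, `-1` at `(k-2,-1)`. -/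
noncomputable def g14 (k : ℤ) : ℤ × ℤ → ℚ := fun v =>
  (if v = (k - 2, k - 1) then 1 else 0) - (if v = (k - 2, -1) then 1 else 0)

/-- The associated linear functional on `V14`. -/
noncomputable def phi14 (k : ℤ) : V14 →ₗ[ℚ] ℚ := Finsupp.linearCombination ℚ (g14 k)

lemma phi14_e (k : ℤ) (v : ℤ × ℤ) : phi14 k (e14 v) = g14 k v := by
  simp [phi14, e14]

/-- `g14 k` is anti-invariant under the involution `(p,q) ↦ (p, p-q)`. -/
lemma g14_tau (k : ℤ) (hk : 4 ≤ k) (p q : ℤ) : g14 k (p, q) + g14 k (p, p - q) = 0 := by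
  simp only [g14, Prod.mk.injEq]
  have hC : (p = k - 2 ∧ p - q = k - 1) ↔ (p = k - 2 ∧ q = -1) := by omega
  have hD : (p = k - 2 ∧ p - q = -1) ↔ (p = k - 2 ∧ q = k - 1) := by omega
  rw [if_congr hC rfl rfl, if_congr hD rfl rfl]
  ring

lemma phi14_ker (k : ℤ) (hk : 4 ≤ k) : K14 ≤ LinearMap.ker (phi14 k) := by
  rw [K14, Submodule.span_le]
  rintro x ⟨p, q, rfl⟩
  simp only [SetLike.mem_coe, LinearMap.mem_ker, map_sub, map_add, phi14_e]
  have h1 := g14_tau k hk p q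
  have h2 := g14_tau k hk q p
  linarith

lemma phi14_eval (k j : ℤ) (hk : 4 ≤ k) (hj : 4 ≤ j) :
    phi14 k
      (((j : ℚ) - 1) •
          (e14 (j - 2, j - 1) - e14 (j - 1, j - 2) +
            e14 (1 - j, 2 - j) - e14 (2 - j, 1 - j)) -
        (-e14 (j - 2, -1) + e14 (2 - j, 1) -
          e14 (1, 2 - j) + e14 (-1, j - 2))) =
    if j = k then (j : ℚ) - 2 else 0 := by
  have h1 : g14 k (j - 2, j - 1) = if j = k then 1 else 0 := by
    simp only [g14, Prod.mk.injEq]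
    have c1 : (j - 2 = k - 2 ∧ j - 1 = k - 1) ↔ j = k := by omega
    have c2 : ¬(j - 2 = k - 2 ∧ j - 1 = -1) := by omega
    rw [if_neg c2, if_congr c1 rfl rfl, sub_zero]
  have h2 : g14 k (j - 1, j - 2) = 0 := by
    simp only [g14, Prod.mk.injEq]
    have c1 : ¬(j - 1 = k - 2 ∧ j - 2 = k - 1) := by omega
    have c2 : ¬(j - 1 = k - 2 ∧ j - 2 = -1) := by omega
    rw [if_neg c1, if_neg c2, sub_zero]
  have h3 : g14 k (1 - j, 2 - j) = 0 := by
    simp only [g14, Prod.mk.injEq]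
    have c1 : ¬(1 - j = k - 2 ∧ 2 - j = k - 1) := by omega
    have c2 : ¬(1 - j = k - 2 ∧ 2 - j = -1) := by omega
    rw [if_neg c1, if_neg c2, sub_zero]
  have h4 : g14 k (2 - j, 1 - j) = 0 := by
    simp only [g14, Prod.mk.injEq]
    have c1 : ¬(2 - j = k - 2 ∧ 1 - j = k - 1) := by omega
    have c2 : ¬(2 - j = k - 2 ∧ 1 - j = -1) := by omega
    rw [if_neg c1, if_neg c2, sub_zero]
  have h5 : g14 k (j - 2, -1) = -(if j = k then 1 else 0) := by
    simp only [g14, Prod.mk.injEq]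
    have c1 : ¬(j - 2 = k - 2 ∧ (-1 : ℤ) = k - 1) := by omega
    have c2 : (j - 2 = k - 2) ↔ j = k := by omega
    rw [if_neg c1]
    simp only [and_true]
    rw [if_congr c2 rfl rfl, zero_sub]
  have h6 : g14 k (2 - j, 1) = 0 := by
    simp only [g14, Prod.mk.injEq]
    have c1 : ¬(2 - j = k - 2 ∧ (1 : ℤ) = k - 1) := by omega
    have c2 : ¬(2 - j = k - 2 ∧ (1 : ℤ) = -1) := by omega
    rw [if_neg c1, if_neg c2, sub_zero]
  have h7 : g14 k (1, 2 - j) = 0 := by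
    simp only [g14, Prod.mk.injEq]
    have c1 : ¬((1 : ℤ) = k - 2 ∧ 2 - j = k - 1) := by omega
    have c2 : ¬((1 : ℤ) = k - 2 ∧ 2 - j = -1) := by omega
    rw [if_neg c1, if_neg c2, sub_zero]
  have h8 : g14 k (-1, j - 2) = 0 := by
    simp only [g14, Prod.mk.injEq]
    have c1 : ¬((-1 : ℤ) = k - 2 ∧ j - 2 = k - 1) := by omega
    have c2 : ¬((-1 : ℤ) = k - 2 ∧ j - 2 = -1) := by omega
    rw [if_neg c1, if_neg c2, sub_zero]
  simp only [map_sub, map_add, map_smul, map_neg, phi14_e, h1, h2, h3, h4, h5, h6, h7, h8]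
  by_cases hjk : j = k <;> simp [hjk] <;> ring

/-- The images in `V/K` of the elements
`v_k = (k-1)(e_{k-2,k-1} - e_{k-1,k-2} + e_{1-k,2-k} - e_{2-k,1-k})
       - (-e_{k-2,-1} + e_{2-k,1} - e_{1,2-k} + e_{-1,k-2})`, `k ≥ 4`,
are linearly independent over `ℚ`. -/
theorem stmt_14 :
    LinearIndependent ℚ fun k : {k : ℤ // 4 ≤ k} =>
      (Submodule.Quotient.mk
        (((k.1 : ℚ) - 1) •
            (e14 (k.1 - 2, k.1 - 1) - e14 (k.1 - 1, k.1 - 2) +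
              e14 (1 - k.1, 2 - k.1) - e14 (2 - k.1, 1 - k.1)) -
          (-e14 (k.1 - 2, -1) + e14 (2 - k.1, 1) -
            e14 (1, 2 - k.1) + e14 (-1, k.1 - 2))) : V14 ⧸ K14) := by
  rw [linearIndependent_iff]
  intro l hl
  ext k
  obtain ⟨k, hk⟩ := k
  show l ⟨k, hk⟩ = 0
  set Ψ : (V14 ⧸ K14) →ₗ[ℚ] ℚ := K14.liftQ (phi14 k) (phi14_ker k hk) with hΨ
  have h0 := congrArg Ψ hl
  rw [map_zero, Finsupp.linearCombination_apply, map_finsuppSum] at h0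
  have hterm : ∀ j : {k : ℤ // 4 ≤ k}, ∀ a : ℚ,
      Ψ (a • Submodule.Quotient.mk
        (((j.1 : ℚ) - 1) •
            (e14 (j.1 - 2, j.1 - 1) - e14 (j.1 - 1, j.1 - 2) +
              e14 (1 - j.1, 2 - j.1) - e14 (2 - j.1, 1 - j.1)) -
          (-e14 (j.1 - 2, -1) + e14 (2 - j.1, 1) -
            e14 (1, 2 - j.1) + e14 (-1, j.1 - 2)))) =
      a * (if j.1 = k then (j.1 : ℚ) - 2 else 0) := by
    intro j a
    rw [map_smul, hΨ, Submodule.liftQ_apply, phi14_eval k j.1 hk j.2, smul_eq_mul]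
  simp only [hterm] at h0
  rw [Finsupp.sum_eq_single ⟨k, hk⟩ (fun b _ hb => by
      rw [if_neg (fun h => hb (Subtype.ext h)), mul_zero])
    (fun _ => by rw [zero_mul])] at h0
  simp only [if_pos rfl] at h0
  have hne : (k : ℚ) - 2 ≠ 0 := by
    have : (4 : ℚ) ≤ (k : ℚ) := by exact_mod_cast hk
    linarith
  have := mul_eq_zero.mp h0
  tauto
end
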